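/- For all I, J ∈ ℐ_λ, the Shapovalov pairing of the vectors ξ_I^+ and ξ_J^− satisfies 𝒮(ξ_I^+, ξ_J^−) = δ_{I,J} · R(z_I)/Q(z_I). -/

import Mathlib

/-!
The pairing is invariant in the sense that `𝒮(ŝ̃ᵢ⁺ f, ŝ̃ᵢ⁻ g) = 𝒮(f, g)^{sᵢ}`: after reindexing the
sum by `sᵢ` the cross terms cancel, and the remaining ones carry the factor
`((zᵢ - zᵢ₊₁)² - h²) / ((zᵢ - zᵢ₊₁ - h)(zᵢ - zᵢ₊₁ + h)) = 1`. As `R` and `Q` transform in the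
same way, the identity for `I` implies it for `sᵢ(I)`, so sorting `I` by adjacent transpositions
reduces everything to `I = I^min`, that is, to the coordinate of `ξ⁻_J` on `v_{I^min}`.

That coordinate is controlled by triangularity: `ξ⁻_J` only has nonzero coordinates on words `K`
with `#{t < k | K t ≤ α} ≤ #{t < k | J t ≤ α}` for all `k, α`, and its coordinate on `J` itself is
`∏ (z_p - z_q) / (z_p - z_q + h)` over the pairs `p < q` with `J p < J q`. Both properties pass from
`J ∘ sᵢ` to `J` along an ascent of `J`. The monotone word `I^min` maximizes all these counts, so
only `J = I^min` contributes, with coefficient `R/Q`.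
-/

open scoped BigOperators

noncomputable section

namespace GRTV

/-- The field `ℂ(z_1,…,z_n,h)` of rational functions. -/
abbrev K (n : ℕ) : Type := FractionRing (MvPolynomial (Fin n ⊕ Unit) ℂ)

/-- The variable `z_i`. -/
def z {n : ℕ} (i : Fin n) : K n :=
  algebraMap (MvPolynomial (Fin n ⊕ Unit) ℂ) (K n) (MvPolynomial.X (Sum.inl i))

/-- The variable `h`. -/
def hvar {n : ℕ} : K n :=
  algebraMap (MvPolynomial (Fin n ⊕ Unit) ℂ) (K n) (MvPolynomial.X (Sum.inr ()))

/-- The field automorphism of `ℂ(z_1,…,z_n,h)` permuting the variables `z_i` by `σ`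
(and fixing `h`); `f ↦ f^σ`. -/
def permK {n : ℕ} (σ : Equiv.Perm (Fin n)) : K n ≃+* K n :=
  IsFractionRing.ringEquivOfRingEquiv
    (MvPolynomial.renameEquiv ℂ (Equiv.sumCongr σ (Equiv.refl Unit))).toRingEquiv

/-- `V ⊗ ℂ(z_1,…,z_n,h)` in coordinates: a vector is the family of its coordinates
in the basis `{v_I}`, where a basis index (a decomposition `I`) is recorded as the word
`m : Fin n → Fin N` with `I_j = m⁻¹(j)`. -/
abbrev VV (n N : ℕ) : Type := (Fin n → Fin N) → K n

/-- `h` for the `+` case (`ε = true`) and `-h` for the `−` case (`ε = false`). -/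
def sign' {n : ℕ} (ε : Bool) : K n := if ε then hvar else -hvar

def fin1 {n : ℕ} (i : ℕ) (hi : i + 1 < n) : Fin n := ⟨i, Nat.lt_of_succ_lt hi⟩
def fin2 {n : ℕ} (i : ℕ) (hi : i + 1 < n) : Fin n := ⟨i + 1, hi⟩

/-- The operator `ŝ̃_i^±`:
`ŝ̃_i^± f = ((z_i−z_{i+1})P^{(i,i+1)} ∓ h)/(z_i−z_{i+1} ∓ h) · f^{s_i}`. -/
def tOp {n N : ℕ} (ε : Bool) (i : ℕ) (hi : i + 1 < n) (f : VV n N) : VV n N :=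
  fun m =>
    ((z (fin1 i hi) - z (fin2 i hi)) *
          permK (Equiv.swap (fin1 i hi) (fin2 i hi))
            (f (m ∘ ⇑(Equiv.swap (fin1 i hi) (fin2 i hi))))
        - sign' ε * permK (Equiv.swap (fin1 i hi) (fin2 i hi)) (f m))
      / (z (fin1 i hi) - z (fin2 i hi) - sign' ε)

/-- The block `I_a = {k : m k = a}` of the decomposition encoded by the word `m`. -/
def fib {n N : ℕ} (m : Fin n → Fin N) (a : Fin N) : Finset (Fin n) :=
  Finset.univ.filter (fun k => m k = a)

/-- `I ∈ ℐ_λ`, i.e. `|I_a| = λ_a` for all `a`. -/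
def memI {n N : ℕ} (lam : Fin N → ℕ) (m : Fin n → Fin N) : Prop :=
  ∀ a : Fin N, (fib m a).card = lam a

/-- The order on subsets of `{1,…,n}` of equal cardinality:
`A ≤ B` iff `a_j ≤ b_j` for all `j`, where `A = {a_1<⋯<a_m}`, `B = {b_1<⋯<b_m}`. -/
def subLE {n : ℕ} (A B : Finset (Fin n)) : Prop :=
  ∃ h : A.card = B.card,
    ∀ j : Fin A.card, (↑(A.orderIsoOfFin rfl j) : Fin n) ≤ ↑(B.orderIsoOfFin h.symm j)

/-- The strict order `I < J` on decompositions: `I_k = J_k` for `k < l` and `I_l < J_l`. -/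
def decLT {n N : ℕ} (mI mJ : Fin n → Fin N) : Prop :=
  ∃ l : Fin N, (∀ k : Fin N, k < l → fib mI k = fib mJ k) ∧
    subLE (fib mI l) (fib mJ l) ∧ fib mI l ≠ fib mJ l

/-- `I ≤ J` on decompositions. -/
def decLE {n N : ℕ} (mI mJ : Fin n → Fin N) : Prop :=
  decLT mI mJ ∨ mI = mJ

/-- `Q(z_I) = ∏_{1≤a<b≤N} ∏_{i∈I_a} ∏_{j∈I_b} (z_i−z_j+h)`. -/
def Qz {n N : ℕ} (m : Fin n → Fin N) : K n :=
  ∏ p ∈ Finset.univ.filter (fun p : Fin n × Fin n => m p.1 < m p.2),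
    (z p.1 - z p.2 + hvar)

/-- `R(z_I) = ∏_{1≤a<b≤N} ∏_{i∈I_a} ∏_{j∈I_b} (z_i−z_j)`. -/
def Rz {n N : ℕ} (m : Fin n → Fin N) : K n :=
  ∏ p ∈ Finset.univ.filter (fun p : Fin n × Fin n => m p.1 < m p.2),
    (z p.1 - z p.2)

/-- The basis vector `v_I` corresponding to the word `m0`. -/
def bas {n N : ℕ} (m0 : Fin n → Fin N) : VV n N :=
  fun m => if m = m0 then 1 else 0

/-- `D = ∏_{1≤i<j≤n}(z_i−z_j+h)`. -/
def Dpoly (n : ℕ) : K n :=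
  ∏ p ∈ Finset.univ.filter (fun p : Fin n × Fin n => p.1 < p.2), (z p.1 - z p.2 + hvar)

/-- `Ď = ∏_{1≤i<j≤n}(z_j−z_i+h)`. -/
def Dcheck (n : ℕ) : K n :=
  ∏ p ∈ Finset.univ.filter (fun p : Fin n × Fin n => p.1 < p.2), (z p.2 - z p.1 + hvar)

section

variable {n N : ℕ}

lemma algebraMap_ne_zero_of_eval_ne_zero {p : MvPolynomial (Fin n ⊕ Unit) ℂ}
    (g : Fin n ⊕ Unit → ℂ) (hp : MvPolynomial.eval g p ≠ 0) :
    algebraMap (MvPolynomial (Fin n ⊕ Unit) ℂ) (K n) p ≠ 0 := by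
  rw [map_ne_zero_iff _ (IsFractionRing.injective _ _)]
  rintro rfl
  simp at hp

lemma z_sub_z_sub_sign_ne_zero (ε : Bool) {i j : Fin n} (hij : i ≠ j) :
    z i - z j - sign' ε ≠ 0 := by
  have hji : (Sum.inl j : Fin n ⊕ Unit) ≠ Sum.inl i := by simpa using hij.symm
  cases ε <;>
  · simp only [sign', z, hvar, Bool.false_eq_true, if_false, if_true, ← map_sub, ← map_neg]
    refine algebraMap_ne_zero_of_eval_ne_zero (fun v => if v = Sum.inl i then 1 else 0) ?_
    simp [hji]

lemma permK_algebraMap (σ : Equiv.Perm (Fin n)) (p : MvPolynomial (Fin n ⊕ Unit) ℂ) :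
    permK σ (algebraMap _ (K n) p) =
      algebraMap _ (K n) (MvPolynomial.rename (Equiv.sumCongr σ (Equiv.refl Unit)) p) :=
  IsFractionRing.ringEquivOfRingEquiv_algebraMap _ p

@[simp]
lemma permK_z (σ : Equiv.Perm (Fin n)) (i : Fin n) : permK σ (z i) = z (σ i) := by
  simp [z, permK_algebraMap]

@[simp]
lemma permK_hvar (σ : Equiv.Perm (Fin n)) : permK σ (hvar : K n) = hvar := by
  simp [hvar, permK_algebraMap]

lemma sum_precomp_perm {ι α M : Type*} [Fintype ι] [DecidableEq ι] [Fintype α]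
    [DecidableEq α] [AddCommMonoid M] (σ : Equiv.Perm ι) (F : (ι → α) → M) :
    ∑ k : ι → α, F (k ∘ σ) = ∑ k, F k :=
  Fintype.sum_equiv (Equiv.arrowCongr σ.symm (Equiv.refl α)) _ _ fun k => by
    congr 1

def shapovalov (f g : VV n N) : K n := ∑ k, f k * g k

lemma shapovalov_bas_left (m : Fin n → Fin N) (g : VV n N) : shapovalov (bas m) g = g m := by
  simp [shapovalov, bas]

lemma tOp_false_apply {i : ℕ} (hi : i + 1 < n) (f : VV n N) (m : Fin n → Fin N) :
    tOp false i hi f m =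
      ((z (fin1 i hi) - z (fin2 i hi)) *
          permK (Equiv.swap (fin1 i hi) (fin2 i hi)) (f (m ∘ Equiv.swap (fin1 i hi) (fin2 i hi)))
        + hvar * permK (Equiv.swap (fin1 i hi) (fin2 i hi)) (f m))
      / (z (fin1 i hi) - z (fin2 i hi) + hvar) := by
  simp only [tOp, sign', Bool.false_eq_true, if_false, sub_neg_eq_add, neg_mul]

lemma fin1_ne_fin2 {i : ℕ} (hi : i + 1 < n) : fin1 i hi ≠ fin2 i hi := by
  simp [fin1, fin2, Fin.ext_iff]

theorem shapovalov_tOp {i : ℕ} (hi : i + 1 < n) (f g : VV n N) :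
    shapovalov (tOp true i hi f) (tOp false i hi g) =
      permK (Equiv.swap (fin1 i hi) (fin2 i hi)) (shapovalov f g) := by
  set s := Equiv.swap (fin1 i hi) (fin2 i hi)
  set A := z (fin1 i hi) - z (fin2 i hi)
  set u := fun k => permK s (f k)
  set v := fun k => permK s (g k)
  have hden : (A - sign' true) * (A - sign' false) ≠ 0 :=
    mul_ne_zero (z_sub_z_sub_sign_ne_zero _ (fin1_ne_fin2 hi))
      (z_sub_z_sub_sign_ne_zero _ (fin1_ne_fin2 hi))
  have hterm : ∀ k, tOp true i hi f k * tOp false i hi g k =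
      (A ^ 2 * (u (k ∘ s) * v (k ∘ s)) - hvar ^ 2 * (u k * v k)
        + A * hvar * (u (k ∘ s) * v k - u ((k ∘ s) ∘ s) * v (k ∘ s)))
        / ((A - sign' true) * (A - sign' false)) := by
    intro k
    have hss : (k ∘ s) ∘ s = k := by ext; simp [s]
    simp only [tOp, sign', hss, if_true, Bool.false_eq_true, if_false, div_mul_div_comm, u, v]
    ring
  simp only [shapovalov, hterm, ← Finset.sum_div, Finset.sum_add_distrib, Finset.sum_sub_distrib,
    ← Finset.mul_sum, sum_precomp_perm s (fun k => u k * v k),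
    sum_precomp_perm s (fun k => u (k ∘ s) * v k), sub_self, mul_zero, add_zero,
    map_sum, map_mul]
  rw [div_eq_iff hden]
  simp only [sign', if_true, Bool.false_eq_true, if_false]
  ring

lemma permK_Rz_comp (σ : Equiv.Perm (Fin n)) (m : Fin n → Fin N) :
    permK σ (Rz (m ∘ σ)) = Rz m := by
  rw [Rz, Rz, map_prod]
  exact Finset.prod_equiv (σ.prodCongr σ) (by simp) (by simp)

lemma permK_Qz_comp (σ : Equiv.Perm (Fin n)) (m : Fin n → Fin N) :
    permK σ (Qz (m ∘ σ)) = Qz m := by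
  rw [Qz, Qz, map_prod]
  exact Finset.prod_equiv (σ.prodCongr σ) (by simp) (by simp)

def diagCoeff (m : Fin n → Fin N) : K n :=
  ∏ p : Fin n × Fin n,
    if m p.1 < m p.2 ∧ p.1 < p.2 then (z p.1 - z p.2) / (z p.1 - z p.2 + hvar) else 1

lemma diagCoeff_of_monotone {m : Fin n → Fin N} (hm : Monotone m) :
    diagCoeff m = Rz m / Qz m := by
  have hlt : ∀ p : Fin n × Fin n, m p.1 < m p.2 → p.1 < p.2 := fun p h =>
    lt_of_not_ge fun hle => (hm hle).not_gt h
  rw [diagCoeff, Rz, Qz, ← Finset.prod_div_distrib, Finset.prod_filter]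
  refine Fintype.prod_congr _ _ fun p => ?_
  by_cases h : m p.1 < m p.2 <;> simp [h, hlt p]

lemma diagCoeff_of_antitone {m : Fin n → Fin N} (hm : Antitone m) : diagCoeff m = 1 :=
  Finset.prod_eq_one fun _ _ => if_neg fun h => (hm h.2.le).not_gt h.1

lemma swap_lt_swap_iff {i : ℕ} (hi : i + 1 < n) {p q : Fin n}
    (h12 : (p, q) ≠ (fin1 i hi, fin2 i hi)) (h21 : (p, q) ≠ (fin2 i hi, fin1 i hi)) :
    Equiv.swap (fin1 i hi) (fin2 i hi) p < Equiv.swap (fin1 i hi) (fin2 i hi) q ↔ p < q := by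
  simp only [ne_eq, Prod.mk.injEq, fin1, fin2, Fin.ext_iff] at h12 h21
  simp only [Equiv.swap_apply_def, fin1, fin2, Fin.lt_def, Fin.ext_iff]
  split_ifs <;> simp only at * <;> omega

lemma diagCoeff_eq_of_lt {i : ℕ} (hi : i + 1 < n) {m : Fin n → Fin N}
    (hasc : m (fin1 i hi) < m (fin2 i hi)) :
    diagCoeff m = (z (fin1 i hi) - z (fin2 i hi)) / (z (fin1 i hi) - z (fin2 i hi) + hvar) *
      permK (Equiv.swap (fin1 i hi) (fin2 i hi))
        (diagCoeff (m ∘ Equiv.swap (fin1 i hi) (fin2 i hi))) := by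
  set s := Equiv.swap (fin1 i hi) (fin2 i hi)
  have hreindex : permK s (diagCoeff (m ∘ s)) = ∏ p : Fin n × Fin n,
      if m p.1 < m p.2 ∧ s p.1 < s p.2 then (z p.1 - z p.2) / (z p.1 - z p.2 + hvar) else 1 := by
    rw [diagCoeff, map_prod]
    refine Fintype.prod_equiv (s.prodCongr s) _ _ fun p => ?_
    simp [apply_ite (permK s), s]
  have hlt : fin1 i hi < fin2 i hi := by simp [Fin.lt_def, fin1, fin2]
  rw [hreindex, diagCoeff, Fintype.prod_eq_mul_prod_compl (fin1 i hi, fin2 i hi),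
    Fintype.prod_eq_mul_prod_compl (fin1 i hi, fin2 i hi)]
  dsimp only
  rw [if_pos ⟨hasc, hlt⟩, Equiv.swap_apply_left, Equiv.swap_apply_right,
    if_neg fun h => h.2.not_gt hlt, one_mul]
  congr 1
  refine Finset.prod_congr rfl fun p hp => ?_
  have h12 : p ≠ (fin1 i hi, fin2 i hi) := by simpa using hp
  by_cases hmp : m p.1 < m p.2
  · have h21 : p ≠ (fin2 i hi, fin1 i hi) := by
      rintro rfl
      exact hmp.not_gt hasc
    simp [hmp, swap_lt_swap_iff hi h12 h21, s]
  · simp [hmp]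

lemma memI_comp_perm {lam : Fin N → ℕ} {m : Fin n → Fin N} (hm : memI lam m)
    (σ : Equiv.Perm (Fin n)) : memI lam (m ∘ σ) := fun a => by
  rw [← hm a]
  exact Finset.card_equiv σ (by simp [fib])

lemma comp_swap_comp_swap {α : Type*} (m : Fin n → α) (a b : Fin n) :
    (m ∘ Equiv.swap a b) ∘ Equiv.swap a b = m := by
  ext; simp

lemma monotone_of_forall_fin1_le_fin2 {α : Type*} [Preorder α] {m : Fin n → α}
    (h : ∀ (i : ℕ) (hi : i + 1 < n), m (fin1 i hi) ≤ m (fin2 i hi)) : Monotone m := by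
  cases n with
  | zero => exact fun a => a.elim0
  | succ n => exact Fin.monotone_iff_le_succ.2 fun i => h i (by omega)

def weight (m : Fin n → Fin N) : ℕ := ∑ t : Fin n, (t : ℕ) * (m t : ℕ)

lemma weight_comp_swap_add {i : ℕ} (hi : i + 1 < n) (m : Fin n → Fin N) :
    weight (m ∘ Equiv.swap (fin1 i hi) (fin2 i hi)) + (m (fin2 i hi) : ℕ) =
      weight m + m (fin1 i hi) := by
  set s := Equiv.swap (fin1 i hi) (fin2 i hi)
  have hreindex : weight (m ∘ s) = ∑ t : Fin n, (s t : ℕ) * (m t : ℕ) := by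
    rw [← Equiv.sum_comp s]
    simp [weight, s]
  have hdiff : ∑ t, ((s t : ℕ) * (m t : ℕ) : ℤ) - ∑ t : Fin n, ((t : ℕ) * (m t : ℕ) : ℤ) =
      (m (fin1 i hi) : ℤ) - m (fin2 i hi) := by
    rw [← Finset.sum_sub_distrib, Fintype.sum_eq_add _ _ (fin1_ne_fin2 hi)
      fun t ht => by simp [s, Equiv.swap_apply_of_ne_of_ne ht.1 ht.2]]
    simp only [s, Equiv.swap_apply_left, Equiv.swap_apply_right, fin1, fin2]
    push_cast
    ring
  zify at hreindex ⊢
  rw [hreindex, weight]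
  push_cast at hdiff ⊢
  linarith

theorem induction_on_ascents {P : (Fin n → Fin N) → Prop} (antitone : ∀ m, Antitone m → P m)
    (swap : ∀ m (i : ℕ) (hi : i + 1 < n), m (fin1 i hi) < m (fin2 i hi) →
      P (m ∘ Equiv.swap (fin1 i hi) (fin2 i hi)) → P m)
    (m : Fin n → Fin N) : P m := by
  induction hw : weight m using Nat.strong_induction_on generalizing m with
  | _ w ih =>
  by_cases hm : Antitone m
  · exact antitone m hm
  obtain ⟨i, hi, hasc⟩ : ∃ (i : ℕ) (hi : i + 1 < n), m (fin1 i hi) < m (fin2 i hi) := by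
    by_contra! h
    exact hm (monotone_toDual_comp_iff.1 (monotone_of_forall_fin1_le_fin2 h))
  refine swap m i hi hasc (ih _ ?_ _ rfl)
  have := weight_comp_swap_add hi m
  rw [Fin.lt_def] at hasc
  omega

theorem induction_on_descents {P : (Fin n → Fin N) → Prop} (monotone : ∀ m, Monotone m → P m)
    (swap : ∀ m (i : ℕ) (hi : i + 1 < n), m (fin2 i hi) < m (fin1 i hi) →
      P (m ∘ Equiv.swap (fin1 i hi) (fin2 i hi)) → P m)
    (m : Fin n → Fin N) : P m := by
  simpa [Function.comp_def] using induction_on_ascents (P := fun m => P (Fin.rev ∘ m))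
    (fun m hm => monotone _ fun a b hab => Fin.rev_le_rev.2 (hm hab))
    (fun m i hi hasc => swap (Fin.rev ∘ m) i hi (Fin.rev_lt_rev.2 hasc)) (Fin.rev ∘ m)

def prefixCount (m : Fin n → Fin N) (α : Fin N) (k : ℕ) : ℕ :=
  (Finset.univ.filter fun t : Fin n => (t : ℕ) < k ∧ m t ≤ α).card

lemma prefixCount_succ (m : Fin n → Fin N) (α : Fin N) (t : Fin n) :
    prefixCount m α (t + 1) = prefixCount m α t + if m t ≤ α then 1 else 0 := by
  have hsucc : ∀ x : Fin n, (x : ℕ) < t + 1 ↔ (x : ℕ) < t ∨ x = t := fun x => by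
    rw [Fin.ext_iff]; omega
  split_ifs with h
  · rw [prefixCount, prefixCount, ← Finset.card_insert_of_notMem (a := t) (by simp)]
    congr 1
    ext x
    by_cases hx : x = t <;> simp [hsucc, hx, h]
  · simp only [prefixCount, add_zero, hsucc, or_and_right]
    congr 1
    ext x
    by_cases hx : x = t <;> simp [hx, h]

lemma prefixCount_comp_swap_of_ne {i : ℕ} (hi : i + 1 < n) (m : Fin n → Fin N) (α : Fin N)
    {k : ℕ} (hk : k ≠ i + 1) :
    prefixCount (m ∘ Equiv.swap (fin1 i hi) (fin2 i hi)) α k = prefixCount m α k := by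
  refine Finset.card_equiv (Equiv.swap (fin1 i hi) (fin2 i hi)) fun t => ?_
  have hlt : ((Equiv.swap (fin1 i hi) (fin2 i hi) t : Fin n) : ℕ) < k ↔ (t : ℕ) < k := by
    rw [Equiv.swap_apply_def]
    split_ifs with h1 h2 <;> simp only [Fin.ext_iff, fin1, fin2] at * <;> omega
  simp [hlt]

lemma prefixCount_fin1 {i : ℕ} (hi : i + 1 < n) (m : Fin n → Fin N) (α : Fin N) :
    prefixCount m α (i + 1) = prefixCount m α i + if m (fin1 i hi) ≤ α then 1 else 0 :=
  prefixCount_succ m α (fin1 i hi)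

lemma prefixCount_fin2 {i : ℕ} (hi : i + 1 < n) (m : Fin n → Fin N) (α : Fin N) :
    prefixCount m α (i + 2) = prefixCount m α (i + 1) + if m (fin2 i hi) ≤ α then 1 else 0 :=
  prefixCount_succ m α (fin2 i hi)

lemma prefixCount_comp_swap_fin1 {i : ℕ} (hi : i + 1 < n) (m : Fin n → Fin N) (α : Fin N) :
    prefixCount (m ∘ Equiv.swap (fin1 i hi) (fin2 i hi)) α (i + 1) =
      prefixCount m α i + if m (fin2 i hi) ≤ α then 1 else 0 := by
  rw [prefixCount_fin1 hi, prefixCount_comp_swap_of_ne hi m α (by omega), Function.comp_apply,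
    Equiv.swap_apply_left]

lemma card_filter_le_of_memI {lam : Fin N → ℕ} {m : Fin n → Fin N} (hm : memI lam m)
    (α : Fin N) :
    (Finset.univ.filter fun t => m t ≤ α).card = ∑ β ∈ Finset.Iic α, lam β := by
  rw [Finset.card_eq_sum_card_fiberwise (f := m) (t := Finset.Iic α) (by intro t; simp)]
  refine Finset.sum_congr rfl fun β hβ => ?_
  rw [← hm β, fib, Finset.filter_filter]
  congr 1
  ext t
  simp only [Finset.mem_filter, Finset.mem_univ, true_and, and_iff_right_iff_imp]
  rintro rfl
  simpa using hβ

lemma prefixCount_le_min (m : Fin n → Fin N) (α : Fin N) (k : ℕ) :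
    prefixCount m α k ≤ min k (Finset.univ.filter fun t => m t ≤ α).card := by
  refine le_min ?_ (Finset.card_le_card (Finset.monotone_filter_right _ fun t _ ht => ht.2))
  calc prefixCount m α k ≤ (Finset.univ.filter fun t : Fin n => (t : ℕ) < k).card :=
        Finset.card_le_card (Finset.monotone_filter_right _ fun t _ ht => ht.1)
    _ ≤ k := Fin.card_filter_val_lt.trans_le (min_le_right _ _)

lemma prefixCount_of_monotone {m : Fin n → Fin N} (hm : Monotone m) (α : Fin N) (k : ℕ) :
    prefixCount m α k = min k (Finset.univ.filter fun t => m t ≤ α).card := by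
  set c := (Finset.univ.filter fun t => m t ≤ α).card
  have hc : c ≤ n := (Finset.card_le_univ _).trans (by simp)
  have hlower : ∀ t : Fin n, m t ≤ α ↔ (t : ℕ) < c := fun t =>
    (Fin.lt_card_filter_univ_iff_apply_of_imp _ fun _ _ hle h => (hm hle).trans h).symm
  rw [prefixCount]
  simp_rw [hlower, ← lt_min_iff, Fin.card_filter_val_lt]
  omega

lemma eq_of_prefixCount_eq {J L : Fin n → Fin N}
    (h : ∀ α k, prefixCount J α k = prefixCount L α k) : J = L := by
  funext t
  have hle : ∀ α, J t ≤ α ↔ L t ≤ α := fun α => by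
    have hJ := prefixCount_succ J α t
    have hL := prefixCount_succ L α t
    rw [h, h] at hJ
    split_ifs at hJ hL with hJt hLt hLt <;> simp only [hJt, hLt] <;> omega
  exact le_antisymm ((hle _).2 le_rfl) ((hle _).1 le_rfl)

lemma eq_of_memI_of_monotone {lam : Fin N → ℕ} {J L : Fin n → Fin N} (hJ : memI lam J)
    (hL : memI lam L) (hJm : Monotone J) (hLm : Monotone L) : J = L :=
  eq_of_prefixCount_eq fun α k => by
    rw [prefixCount_of_monotone hJm, prefixCount_of_monotone hLm, card_filter_le_of_memI hJ,
      card_filter_le_of_memI hL]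

lemma memI_rev_comp {lam : Fin N → ℕ} {m : Fin n → Fin N} (hm : memI lam m) :
    memI (lam ∘ Fin.rev) (Fin.rev ∘ m) := fun a => by
  rw [Function.comp_apply, ← hm]
  congr 1
  ext t
  simp [fib, Fin.rev_eq_iff]

lemma eq_of_memI_of_antitone {lam : Fin N → ℕ} {J L : Fin n → Fin N} (hJ : memI lam J)
    (hL : memI lam L) (hJa : Antitone J) (hLa : Antitone L) : J = L :=
  Fin.rev_injective.comp_left <| eq_of_memI_of_monotone (memI_rev_comp hJ) (memI_rev_comp hL)
    (fun _ _ h => Fin.rev_le_rev.2 (hJa h)) (fun _ _ h => Fin.rev_le_rev.2 (hLa h))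

def Dominates (J K : Fin n → Fin N) : Prop :=
  ∀ α k, prefixCount K α k ≤ prefixCount J α k

lemma Dominates.refl (J : Fin n → Fin N) : Dominates J J := fun _ _ => le_rfl

lemma Dominates.trans {J K L : Fin n → Fin N} (hJK : Dominates J K) (hKL : Dominates K L) :
    Dominates J L := fun α k => (hKL α k).trans (hJK α k)

lemma dominates_comp_swap {i : ℕ} (hi : i + 1 < n) {m : Fin n → Fin N}
    (hasc : m (fin1 i hi) < m (fin2 i hi)) :
    Dominates m (m ∘ Equiv.swap (fin1 i hi) (fin2 i hi)) := fun α k => by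
  by_cases hk : k = i + 1
  · subst hk
    rw [prefixCount_comp_swap_fin1, prefixCount_fin1 hi]
    have := fun h : m (fin2 i hi) ≤ α => hasc.le.trans h
    split_ifs <;> omega
  · exact (prefixCount_comp_swap_of_ne hi m α hk).le

lemma not_dominates_comp_swap {i : ℕ} (hi : i + 1 < n) {m : Fin n → Fin N}
    (hdes : m (fin2 i hi) < m (fin1 i hi)) :
    ¬ Dominates m (m ∘ Equiv.swap (fin1 i hi) (fin2 i hi)) := fun h => by
  have := h (m (fin2 i hi)) (i + 1)
  rw [prefixCount_comp_swap_fin1, prefixCount_fin1 hi, if_pos le_rfl, if_neg hdes.not_ge] at this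
  omega

lemma Dominates.of_comp_swap {i : ℕ} (hi : i + 1 < n) {X K : Fin n → Fin N}
    (hasc : X (fin1 i hi) < X (fin2 i hi))
    (h : Dominates (X ∘ Equiv.swap (fin1 i hi) (fin2 i hi))
      (K ∘ Equiv.swap (fin1 i hi) (fin2 i hi))) : Dominates X K := fun α k => by
  have hne : ∀ k, k ≠ i + 1 → prefixCount K α k ≤ prefixCount X α k := fun k hk => by
    simpa only [prefixCount_comp_swap_of_ne hi _ α hk] using h α k
  by_cases hk : k = i + 1
  · subst hk
    have hi0 := hne i (by omega)
    have hi2 := hne (i + 2) (by omega)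
    rw [prefixCount_fin2 hi, prefixCount_fin2 hi] at hi2
    rw [prefixCount_fin1 hi, prefixCount_fin1 hi] at hi2 ⊢
    have := fun h : X (fin2 i hi) ≤ α => hasc.le.trans h
    split_ifs at hi2 ⊢ <;> omega
  · exact hne k hk

lemma eq_of_dominates_of_monotone {lam : Fin N → ℕ} {J m : Fin n → Fin N} (hJ : memI lam J)
    (hm : memI lam m) (hmono : Monotone m) (h : Dominates J m) : J = m :=
  eq_of_prefixCount_eq fun α k => le_antisymm
    (by
      have := prefixCount_le_min J α k
      rwa [card_filter_le_of_memI hJ, ← card_filter_le_of_memI hm,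
        ← prefixCount_of_monotone hmono] at this)
    (h α k)

theorem xi_minus_triangular {lam : Fin N → ℕ} {m1 : Fin n → Fin N} (hm1 : memI lam m1)
    (hm1anti : Antitone m1) {ξm : (Fin n → Fin N) → VV n N} (hbase : ξm m1 = bas m1)
    (hrec : ∀ m, memI lam m → ∀ (i : ℕ) (hi : i + 1 < n),
      ξm (m ∘ Equiv.swap (fin1 i hi) (fin2 i hi)) = tOp false i hi (ξm m))
    {J : Fin n → Fin N} (hJ : memI lam J) :
    (∀ K, ξm J K ≠ 0 → Dominates J K) ∧ ξm J J = diagCoeff J := by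
  induction J using induction_on_ascents with
  | antitone J hJa =>
    obtain rfl := eq_of_memI_of_antitone hJ hm1 hJa hm1anti
    refine ⟨fun K hK => ?_, by simp [hbase, bas, diagCoeff_of_antitone hJa]⟩
    obtain rfl : K = J := by simpa [hbase, bas] using hK
    exact Dominates.refl K
  | swap J i hi hasc ih =>
    set s := Equiv.swap (fin1 i hi) (fin2 i hi) with hs
    have hJs := memI_comp_perm hJ s
    obtain ⟨hsupp, hdiag⟩ := ih hJs
    have hJ_eq : ξm J = tOp false i hi (ξm (J ∘ s)) := by
      simpa only [s, comp_swap_comp_swap] using hrec _ hJs i hi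
    refine ⟨fun K hK => ?_, ?_⟩
    · rw [hJ_eq, tOp_false_apply] at hK
      by_cases hKs : ξm (J ∘ s) (K ∘ s) = 0
      · have hK' : ξm (J ∘ s) K ≠ 0 := fun h => hK (by simp [s, hKs, h])
        exact (dominates_comp_swap hi hasc).trans (hsupp K hK')
      · exact (hsupp _ hKs).of_comp_swap hi hasc
    · have hzero : ξm (J ∘ s) J = 0 := by
        by_contra h
        refine not_dominates_comp_swap hi (m := J ∘ s) (by simpa [s] using hasc) ?_
        simpa only [s, comp_swap_comp_swap] using hsupp J h
      rw [hJ_eq, tOp_false_apply, ← hs, hzero, map_zero, mul_zero, add_zero, hdiag,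
        diagCoeff_eq_of_lt hi hasc, div_mul_eq_mul_div]

theorem xi_minus_apply_of_monotone {lam : Fin N → ℕ} {m0 m1 : Fin n → Fin N}
    (hm0 : memI lam m0) (hm0mono : Monotone m0) (hm1 : memI lam m1) (hm1anti : Antitone m1)
    {ξm : (Fin n → Fin N) → VV n N} (hbase : ξm m1 = bas m1)
    (hrec : ∀ m, memI lam m → ∀ (i : ℕ) (hi : i + 1 < n),
      ξm (m ∘ Equiv.swap (fin1 i hi) (fin2 i hi)) = tOp false i hi (ξm m))
    {J : Fin n → Fin N} (hJ : memI lam J) :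
    ξm J m0 = if m0 = J then Rz m0 / Qz m0 else 0 := by
  obtain ⟨hsupp, hdiag⟩ := xi_minus_triangular hm1 hm1anti hbase hrec hJ
  by_cases h0J : m0 = J
  · subst h0J
    rw [if_pos rfl, hdiag, diagCoeff_of_monotone hm0mono]
  · rw [if_neg h0J]
    by_contra h
    exact h0J (eq_of_dominates_of_monotone hJ hm0 hm0mono (hsupp m0 h)).symm

end

theorem statement8_general (n N : ℕ) (lam : Fin N → ℕ)
    (m0 : Fin n → Fin N) (hm0 : memI lam m0) (hm0mono : Monotone m0)
    (m1 : Fin n → Fin N) (hm1 : memI lam m1) (hm1anti : Antitone m1)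
    (ξp ξm : (Fin n → Fin N) → VV n N)
    (hp0 : ξp m0 = bas m0)
    (hprec : ∀ m, memI lam m → ∀ (i : ℕ) (hi : i + 1 < n),
      ξp (m ∘ ⇑(Equiv.swap (fin1 i hi) (fin2 i hi))) = tOp true i hi (ξp m))
    (hm0' : ξm m1 = bas m1)
    (hmrec : ∀ m, memI lam m → ∀ (i : ℕ) (hi : i + 1 < n),
      ξm (m ∘ ⇑(Equiv.swap (fin1 i hi) (fin2 i hi))) = tOp false i hi (ξm m)) :
    ∀ mI mJ : Fin n → Fin N, memI lam mI → memI lam mJ →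
      (∑ k : Fin n → Fin N, ξp mI k * ξm mJ k) =
        if mI = mJ then Rz mI / Qz mI else 0 := by
  intro mI
  change ∀ mJ, _ → _ → shapovalov (ξp mI) (ξm mJ) = _
  induction mI using induction_on_descents with
  | monotone I hI =>
    intro J hImem hJ
    obtain rfl := eq_of_memI_of_monotone hImem hm0 hI hm0mono
    rw [hp0, shapovalov_bas_left, xi_minus_apply_of_monotone hImem hI hm1 hm1anti hm0' hmrec hJ]
  | swap I i hi _ ih =>
    intro J hImem hJ
    set s := Equiv.swap (fin1 i hi) (fin2 i hi)
    have hIs := memI_comp_perm hImem s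
    have hJs := memI_comp_perm hJ s
    calc shapovalov (ξp I) (ξm J)
        = shapovalov (tOp true i hi (ξp (I ∘ s))) (tOp false i hi (ξm (J ∘ s))) := by
          rw [← hprec _ hIs, ← hmrec _ hJs, comp_swap_comp_swap, comp_swap_comp_swap]
      _ = permK s (if I ∘ s = J ∘ s then Rz (I ∘ s) / Qz (I ∘ s) else 0) := by
          rw [shapovalov_tOp, ih (J ∘ s) hIs hJs]
      _ = if I = J then Rz I / Qz I else 0 := by
          by_cases hIJ : I = J
          · simp [hIJ, map_div₀, permK_Rz_comp, permK_Qz_comp]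
          · rw [if_neg fun h => hIJ (s.surjective.injective_comp_right h), if_neg hIJ,
              map_zero]

/-- for `I, J ∈ ℐ_λ`, the Shapovalov pairing (the bilinear form for which
the basis `{v_I}` is orthonormal) satisfies `𝒮(ξ_I^+, ξ_J^−) = δ_{I,J} R(z_I)/Q(z_I)`.
Here `ξ^+` and `ξ^−` are the (unique) families determined by `ξ^+_{I^min} = v_{I^min}`,
`ξ^+_{s_i(I)} = ŝ̃_i^+ ξ^+_I` and `ξ^−_{I^max} = v_{I^max}`, `ξ^−_{s_i(I)} = ŝ̃_i^− ξ^−_I`;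
`m0` encodes `I^min` (monotone) and `m1` encodes `I^max` (antitone). -/
theorem statement8 (n N : ℕ) (lam : Fin N → ℕ) (hlam : ∑ a : Fin N, lam a = n)
    (m0 : Fin n → Fin N) (hm0 : memI lam m0) (hm0mono : Monotone m0)
    (m1 : Fin n → Fin N) (hm1 : memI lam m1) (hm1anti : Antitone m1)
    (ξp ξm : (Fin n → Fin N) → VV n N)
    (hp0 : ξp m0 = bas m0)
    (hprec : ∀ m, memI lam m → ∀ (i : ℕ) (hi : i + 1 < n),
      ξp (m ∘ ⇑(Equiv.swap (fin1 i hi) (fin2 i hi))) = tOp true i hi (ξp m))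
    (hm0' : ξm m1 = bas m1)
    (hmrec : ∀ m, memI lam m → ∀ (i : ℕ) (hi : i + 1 < n),
      ξm (m ∘ ⇑(Equiv.swap (fin1 i hi) (fin2 i hi))) = tOp false i hi (ξm m)) :
    ∀ mI mJ : Fin n → Fin N, memI lam mI → memI lam mJ →
      (∑ k : Fin n → Fin N, ξp mI k * ξm mJ k) =
        if mI = mJ then Rz mI / Qz mI else 0 :=
  statement8_general n N lam m0 hm0 hm0mono m1 hm1 hm1anti ξp ξm hp0 hprec hm0' hmrec

end GRTV
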